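/- Let G1 and G2 be graphs on disjoint vertex sets. Then the minimum DC-cost over all HC-trees of the disjoint union G1 ⊔ G2 equals the minimum DC-cost over all HC-trees of G1 plus the minimum DC-cost over all HC-trees of G2. In particular, for every graph G and every k ≥ 1, the minimum DC-cost over all HC-trees of the disjoint union G^{(k)} of k copies of G equals k times the minimum DC-cost over all HC-trees of G. -/

import Mathlib

/-- A rooted binary tree whose leaves are labelled by vertices of type `V`.
Every internal node has exactly two children. -/
inductive HCTree (V : Type) where
  | leaf : V → HCTree V
  | node : HCTree V → HCTree V → HCTree V

namespace HCTree

/-- The list of leaf labels of an HC-tree, from left to right. -/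
def leaves {V : Type} : HCTree V → List V
  | leaf v => [v]
  | node l r => leaves l ++ leaves r

open Classical in
/-- The Dasgupta cost of an HC-tree on a graph `G`: the sum over all edges `uv` of `G`
of the number of leaves of the subtree rooted at the least common ancestor of `u` and `v`.
Equivalently (as computed here, recursively), at each internal node we add
(number of leaves below the node) times (number of edges split at that node). -/
noncomputable def dcCost {V : Type} (G : SimpleGraph V) : HCTree V → ℕ
  | leaf _ => 0
  | node l r =>
      dcCost G l + dcCost G r +
        (l.leaves.length + r.leaves.length) *
          (l.leaves.map (fun u => r.leaves.countP (fun v => decide (G.Adj u v)))).sum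

end HCTree

open HCTree

/-- `T` together with the implicit leaf labelling is an HC-tree of a graph on vertex set `V`:
the leaf labels are pairwise distinct and every vertex occurs as a leaf label,
i.e. the labelling is a bijection between `V` and the leaves of `T`. -/
def IsHCTree {V : Type} (T : HCTree V) : Prop :=
  T.leaves.Nodup ∧ ∀ v : V, v ∈ T.leaves

/-- `W` is the maximum DC-cost over all HC-trees of `G`. -/
def IsMaxCost {V : Type} (G : SimpleGraph V) (W : ℕ) : Prop :=
  (∃ T : HCTree V, IsHCTree T ∧ dcCost G T = W) ∧
  ∀ T : HCTree V, IsHCTree T → dcCost G T ≤ W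

/-- `W` is the minimum DC-cost over all HC-trees of `G`. -/
def IsMinCost {V : Type} (G : SimpleGraph V) (W : ℕ) : Prop :=
  (∃ T : HCTree V, IsHCTree T ∧ dcCost G T = W) ∧
  ∀ T : HCTree V, IsHCTree T → W ≤ dcCost G T

/-- The disjoint union `G^(k)` of `k` copies of `G`, on vertex set `V × Fin k`. -/
def copies {V : Type} (G : SimpleGraph V) (k : ℕ) : SimpleGraph (V × Fin k) where
  Adj a b := a.2 = b.2 ∧ G.Adj a.1 b.1
  symm := ⟨fun _ _ h => ⟨h.1.symm, h.2.symm⟩⟩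
  loopless := ⟨fun a h => G.loopless.irrefl a.1 h.2⟩

/-- The disjoint union of two graphs on disjoint vertex sets, on the sum type. -/
def disjUnion {V1 V2 : Type} (G1 : SimpleGraph V1) (G2 : SimpleGraph V2) :
    SimpleGraph (V1 ⊕ V2) where
  Adj a b := Sum.LiftRel G1.Adj G2.Adj a b
  symm := by
    constructor
    intro a b h
    cases h with
    | inl h => exact Sum.LiftRel.inl h.symm
    | inr h => exact Sum.LiftRel.inr h.symm
  loopless := by
    constructor
    intro a h
    cases h with
    | inl h => exact G1.loopless.irrefl _ h
    | inr h => exact G2.loopless.irrefl _ h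

/-!
An optimal tree for `G1 ⊔ G2` is obtained by joining optimal trees of `G1` and `G2` under a new
root, which separates no edge. Conversely, the cost of any HC-tree `T` of `G1 ⊔ G2` is the sum of
the costs of `T` for the edges of `G1` and for the edges of `G2`. Restricting `T` to the vertices
of `G1` (contracting the nodes left with one child) gives an HC-tree of `G1` whose cost is at most
the first summand, since every subtree only shrinks; likewise for `G2`. The statement for `k`
copies follows by induction on `k`.
-/

theorem List.countP_or_eq_add {α : Type*} {p q : α → Bool} {l : List α}
    (h : ∀ a ∈ l, ¬(p a ∧ q a)) : l.countP (fun a => p a || q a) = l.countP p + l.countP q := by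
  induction l with
  | nil => rfl
  | cons a l ih =>
    simp only [List.mem_cons, forall_eq_or_imp] at h
    simp only [List.countP_cons, ih h.2, Bool.or_eq_true]
    split_ifs <;> simp_all <;> omega

namespace HCTree

variable {V W : Type}

open Classical in
noncomputable def crossEdges (G : SimpleGraph V) (L R : List V) : ℕ :=
  (L.map fun u => R.countP fun v => decide (G.Adj u v)).sum

theorem dcCost_node (G : SimpleGraph V) (l r : HCTree V) :
    dcCost G (node l r) = dcCost G l + dcCost G r +
      (l.leaves.length + r.leaves.length) * crossEdges G l.leaves r.leaves :=
  rfl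

theorem crossEdges_map {G : SimpleGraph V} {G' : SimpleGraph W} {f : V → W}
    (hf : ∀ u v, G'.Adj (f u) (f v) ↔ G.Adj u v) (L R : List V) :
    crossEdges G' (L.map f) (R.map f) = crossEdges G L R := by
  simp only [crossEdges, List.map_map, List.countP_map]
  congr 1
  refine List.map_congr_left fun u _ => List.countP_congr fun v _ => ?_
  simp [hf]

theorem crossEdges_eq_zero {G : SimpleGraph V} {L R : List V}
    (h : ∀ u ∈ L, ∀ v ∈ R, ¬G.Adj u v) : crossEdges G L R = 0 := by
  simp only [crossEdges, List.sum_eq_zero_iff, List.mem_map]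
  rintro _ ⟨u, hu, rfl⟩
  simpa [List.countP_eq_zero] using h u hu

open Classical in
theorem crossEdges_sup {G H : SimpleGraph V} (hGH : Disjoint G H) (L R : List V) :
    crossEdges (G ⊔ H) L R = crossEdges G L R + crossEdges H L R := by
  simp only [crossEdges, ← List.sum_map_add]
  congr 1
  refine List.map_congr_left fun u _ => ?_
  rw [← List.countP_or_eq_add fun v _ => by simpa using SimpleGraph.disjoint_left.1 hGH u v]
  exact List.countP_congr fun v _ => by simp

theorem crossEdges_filterMap_le {G : SimpleGraph W} {G' : SimpleGraph V} {f : V → Option W}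
    (hf : ∀ u v a b, f u = some a → f v = some b → G.Adj a b → G'.Adj u v) (L R : List V) :
    crossEdges G (L.filterMap f) (R.filterMap f) ≤ crossEdges G' L R := by
  induction L with
  | nil => simp [crossEdges]
  | cons u L ih =>
    simp only [crossEdges, List.filterMap_cons, List.map_cons, List.sum_cons] at ih ⊢
    rcases hu : f u with _ | a
    · exact ih.trans (Nat.le_add_left _ _)
    · refine Nat.add_le_add ?_ ih
      beta_reduce
      rw [List.countP_filterMap]
      refine List.countP_mono_left fun v _ hv => ?_
      rcases hv' : f v with _ | b <;> simp_all

theorem nonempty : HCTree V → Nonempty V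
  | leaf v => ⟨v⟩
  | node l _ => l.nonempty

def map (f : V → W) : HCTree V → HCTree W
  | leaf v => leaf (f v)
  | node l r => node (l.map f) (r.map f)

theorem leaves_map (f : V → W) (T : HCTree V) : (T.map f).leaves = T.leaves.map f := by
  induction T with
  | leaf v => rfl
  | node l r ihl ihr => simp [map, leaves, ihl, ihr]

theorem dcCost_map {G : SimpleGraph V} {G' : SimpleGraph W} {f : V → W}
    (hf : ∀ u v, G'.Adj (f u) (f v) ↔ G.Adj u v) (T : HCTree V) :
    dcCost G' (T.map f) = dcCost G T := by
  induction T with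
  | leaf v => rfl
  | node l r ihl ihr =>
    simp only [map, dcCost_node, ihl, ihr, leaves_map, List.length_map, crossEdges_map hf]

theorem _root_.IsHCTree.map {T : HCTree V} (hT : IsHCTree T) (e : V ≃ W) :
    IsHCTree (T.map e) := by
  refine ⟨?_, fun w => ?_⟩
  · rw [leaves_map]
    exact hT.1.map e.injective
  · rw [leaves_map, List.mem_map]
    exact ⟨e.symm w, hT.2 _, e.apply_symm_apply w⟩

theorem dcCost_sup {G H : SimpleGraph V} (hGH : Disjoint G H) (T : HCTree V) :
    dcCost (G ⊔ H) T = dcCost G T + dcCost H T := by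
  induction T with
  | leaf v => rfl
  | node l r ihl ihr =>
    simp only [dcCost_node, ihl, ihr, crossEdges_sup hGH]
    ring

/-- The subtree spanned by the leaves on which `f` is defined, relabelled by `f`;
nodes left with a single child are contracted. -/
def restrict (f : V → Option W) : HCTree V → Option (HCTree W)
  | leaf v => (f v).map leaf
  | node l r => Option.merge node (l.restrict f) (r.restrict f)

theorem elim_restrict (f : V → Option W) (T : HCTree V) :
    (T.restrict f).elim [] leaves = T.leaves.filterMap f := by
  induction T with
  | leaf v => cases hv : f v <;> simp [restrict, leaves, hv]
  | node l r ihl ihr =>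
    simp only [restrict, leaves, List.filterMap_append, ← ihl, ← ihr]
    cases l.restrict f <;> cases r.restrict f <;> simp [leaves]

theorem leaves_of_restrict_eq_some {f : V → Option W} {T : HCTree V} {S : HCTree W}
    (h : T.restrict f = some S) : S.leaves = T.leaves.filterMap f := by
  simpa [h] using elim_restrict f T

theorem dcCost_restrict_le {G : SimpleGraph W} {G' : SimpleGraph V} {f : V → Option W}
    (hf : ∀ u v a b, f u = some a → f v = some b → G.Adj a b → G'.Adj u v)
    {T : HCTree V} {S : HCTree W} (hS : T.restrict f = some S) : dcCost G S ≤ dcCost G' T := by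
  induction T generalizing S with
  | leaf v =>
    cases hv : f v <;> simp only [restrict, hv, Option.map_none, Option.map_some,
      reduceCtorEq, Option.some.injEq] at hS
    simp [← hS, dcCost]
  | node l r ihl ihr =>
    rcases hl : l.restrict f with _ | a <;> rcases hr : r.restrict f with _ | b <;>
      simp only [restrict, hl, hr, Option.merge, Option.some.injEq, reduceCtorEq] at hS <;>
      subst hS <;> rw [dcCost_node]
    · exact (ihr hr).trans (by omega)
    · exact (ihl hl).trans (by omega)
    · rw [dcCost_node, leaves_of_restrict_eq_some hl, leaves_of_restrict_eq_some hr]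
      gcongr
      · exact ihl hl
      · exact ihr hr
      · exact List.length_filterMap_le _ _
      · exact List.length_filterMap_le _ _
      · exact crossEdges_filterMap_le hf _ _

theorem _root_.IsHCTree.exists_restrict [Nonempty W] {T : HCTree V} (hT : IsHCTree T)
    {f : V → Option W} (hinj : ∀ a a' b, b ∈ f a → b ∈ f a' → a = a')
    (hsurj : ∀ w, ∃ v, f v = some w) : ∃ S, T.restrict f = some S ∧ IsHCTree S := by
  have hmem : ∀ w, w ∈ T.leaves.filterMap f := fun w =>
    List.mem_filterMap.2 ((hsurj w).imp fun v hv => ⟨hT.2 v, hv⟩)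
  rcases hS : T.restrict f with _ | S
  · have := elim_restrict f T
    simp only [hS, Option.elim_none] at this
    exact absurd (hmem (Classical.arbitrary W)) (by simp [← this])
  · rw [← leaves_of_restrict_eq_some hS] at hmem
    refine ⟨S, rfl, ?_, hmem⟩
    rw [leaves_of_restrict_eq_some hS]
    exact hT.1.filterMap hinj

end HCTree

section

open HCTree

variable {V V1 V2 W : Type}

theorem IsMinCost.of_iso {G : SimpleGraph V} {G' : SimpleGraph W} {c : ℕ} (h : IsMinCost G c)
    (e : G ≃g G') : IsMinCost G' c := by
  obtain ⟨⟨T, hT, rfl⟩, hmin⟩ := h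
  refine ⟨⟨T.map e, hT.map e.toEquiv, dcCost_map (fun _ _ => e.map_adj_iff) T⟩, fun T' hT' => ?_⟩
  rw [← dcCost_map (fun _ _ => e.symm.map_adj_iff) T']
  exact hmin _ (hT'.map e.symm.toEquiv)

theorem disjUnion_eq_sup (G1 : SimpleGraph V1) (G2 : SimpleGraph V2) :
    disjUnion G1 G2 = disjUnion G1 ⊥ ⊔ disjUnion ⊥ G2 := by
  ext (u | u) (v | v) <;> simp [disjUnion]

theorem disjoint_disjUnion_bot (G1 : SimpleGraph V1) (G2 : SimpleGraph V2) :
    Disjoint (disjUnion G1 ⊥) (disjUnion ⊥ G2) := by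
  rw [SimpleGraph.disjoint_left]
  rintro (u | u) (v | v) <;> simp [disjUnion]

theorem IsHCTree.node_map_inl_inr {T1 : HCTree V1} {T2 : HCTree V2} (h1 : IsHCTree T1)
    (h2 : IsHCTree T2) : IsHCTree (node (T1.map Sum.inl) (T2.map Sum.inr)) := by
  refine ⟨?_, ?_⟩
  · simp only [leaves, leaves_map, List.nodup_append]
    refine ⟨h1.1.map Sum.inl_injective, h2.1.map Sum.inr_injective, ?_⟩
    simp
  · rintro (v | v) <;> simp [leaves, leaves_map, h1.2, h2.2]

theorem dcCost_disjUnion_node_map (G1 : SimpleGraph V1) (G2 : SimpleGraph V2)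
    (T1 : HCTree V1) (T2 : HCTree V2) :
    dcCost (disjUnion G1 G2) (node (T1.map Sum.inl) (T2.map Sum.inr)) =
      dcCost G1 T1 + dcCost G2 T2 := by
  have hcross :
      crossEdges (disjUnion G1 G2) (T1.map Sum.inl).leaves (T2.map Sum.inr).leaves = 0 :=
    crossEdges_eq_zero (by simp [leaves_map, disjUnion])
  rw [dcCost_node, hcross, dcCost_map (G := G1) (by simp [disjUnion]),
    dcCost_map (G := G2) (by simp [disjUnion])]
  rfl

theorem exists_le_dcCost_disjUnion [Nonempty V1] [Nonempty V2] (G1 : SimpleGraph V1)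
    (G2 : SimpleGraph V2) {T : HCTree (V1 ⊕ V2)} (hT : IsHCTree T) :
    ∃ T1 T2, IsHCTree T1 ∧ IsHCTree T2 ∧
      dcCost G1 T1 + dcCost G2 T2 ≤ dcCost (disjUnion G1 G2) T := by
  obtain ⟨T1, h1, hT1⟩ := hT.exists_restrict (f := Sum.getLeft?)
    (by simp [Sum.getLeft?_eq_some_iff]) fun v => ⟨Sum.inl v, rfl⟩
  obtain ⟨T2, h2, hT2⟩ := hT.exists_restrict (f := Sum.getRight?)
    (by simp [Sum.getRight?_eq_some_iff]) fun v => ⟨Sum.inr v, rfl⟩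
  refine ⟨T1, T2, hT1, hT2, ?_⟩
  rw [disjUnion_eq_sup, dcCost_sup (disjoint_disjUnion_bot G1 G2)]
  gcongr
  · exact dcCost_restrict_le (by simp [Sum.getLeft?_eq_some_iff, disjUnion]) h1
  · exact dcCost_restrict_le (by simp [Sum.getRight?_eq_some_iff, disjUnion]) h2

theorem IsMinCost.disjUnion {G1 : SimpleGraph V1} {G2 : SimpleGraph V2} {W1 W2 : ℕ}
    (h1 : IsMinCost G1 W1) (h2 : IsMinCost G2 W2) : IsMinCost (disjUnion G1 G2) (W1 + W2) := by
  obtain ⟨⟨T1, hT1, rfl⟩, hmin1⟩ := h1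
  obtain ⟨⟨T2, hT2, rfl⟩, hmin2⟩ := h2
  have := T1.nonempty
  have := T2.nonempty
  refine ⟨⟨_, hT1.node_map_inl_inr hT2, dcCost_disjUnion_node_map G1 G2 T1 T2⟩, fun T hT => ?_⟩
  obtain ⟨S1, S2, hS1, hS2, hle⟩ := exists_le_dcCost_disjUnion G1 G2 hT
  exact (add_le_add (hmin1 S1 hS1) (hmin2 S2 hS2)).trans hle

def copiesOneIso (G : SimpleGraph V) : copies G 1 ≃g G where
  toEquiv := Equiv.prodUnique V (Fin 1)
  map_rel_iff' {a b} := by simp [copies, Subsingleton.elim a.2 b.2]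

def copiesSuccIso (G : SimpleGraph V) (k : ℕ) : disjUnion (copies G k) G ≃g copies G (k + 1) where
  toEquiv := ((Equiv.refl _).sumCongr (Equiv.prodUnique V (Fin 1)).symm).trans <|
    (Equiv.prodSumDistrib V (Fin k) (Fin 1)).symm.trans <| (Equiv.refl V).prodCongr finSumFinEquiv
  map_rel_iff' := by
    rintro (⟨u, i⟩ | u) (⟨v, j⟩ | v) <;> simp [copies, disjUnion, Fin.ext_iff] <;> omega

theorem IsMinCost.copies {G : SimpleGraph V} {W : ℕ} (h : IsMinCost G W) {k : ℕ} (hk : 1 ≤ k) :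
    IsMinCost (copies G k) (k * W) := by
  induction k, hk using Nat.le_induction with
  | base => simpa using h.of_iso (copiesOneIso G).symm
  | succ k _ ih => simpa [add_mul] using (ih.disjUnion h).of_iso (copiesSuccIso G k)

end

/-- The minimum DC-cost over HC-trees of a disjoint union `G1 ⊔ G2`
is the sum of the minimum DC-costs of `G1` and `G2`.  In particular, for every graph `G`
and every `k ≥ 1`, the minimum DC-cost over HC-trees of the disjoint union `G^(k)` of
`k` copies of `G` is `k` times the minimum DC-cost of `G`. -/
theorem minCost_disjUnion :
    (∀ (V1 V2 : Type) (G1 : SimpleGraph V1) (G2 : SimpleGraph V2) (W1 W2 : ℕ),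
      IsMinCost G1 W1 → IsMinCost G2 W2 → IsMinCost (disjUnion G1 G2) (W1 + W2)) ∧
    (∀ (V : Type) (G : SimpleGraph V) (W k : ℕ), 1 ≤ k → IsMinCost G W →
      IsMinCost (copies G k) (k * W)) :=
  ⟨fun _ _ _ _ _ _ h1 h2 => h1.disjUnion h2, fun _ _ _ _ hk h => h.copies hk⟩
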